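/- Let G = (V,E) be a finite directed graph and k ≥ 1. Then G has an out-branching with at least k internal nodes if and only if there exists a node r ∈ V such that G has an out-branching rooted at r and G has an out-tree rooted at r with exactly k internal nodes and at most k leaves. -/

import Mathlib

variable {V : Type*}

/-- The node set of a rooted set `A` of directed edges with root `r`: the root together
with all endpoints of edges of `A`. -/
def otNodes [DecidableEq V] (A : Finset (V × V)) (r : V) : Finset V :=
  insert r (A.image Prod.fst ∪ A.image Prod.snd)

/-- `A` is the edge set of an out-tree rooted at `r`: edges join distinct nodes, the root
has in-degree `0`, every other node has in-degree exactly `1`, and every node is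
reachable from the root along directed edges.  (This is equivalent to: the underlying
undirected graph is a tree and `r` is the unique node of in-degree `0`.) -/
structure IsOutTree [DecidableEq V] (A : Finset (V × V)) (r : V) : Prop where
  ne : ∀ e ∈ A, e.1 ≠ e.2
  root_no_in : ∀ e ∈ A, e.2 ≠ r
  in_unique : ∀ v ∈ otNodes A r, v ≠ r → (A.filter fun e => e.2 = v).card = 1
  reach : ∀ v ∈ otNodes A r, Relation.ReflTransGen (fun a b => (a, b) ∈ A) r v

/-- The number of internal nodes (nodes of out-degree at least `1`) of the out-tree with
edge set `A` and root `r`. -/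
def internalCount [DecidableEq V] (A : Finset (V × V)) (r : V) : ℕ :=
  ((otNodes A r).filter fun v => (A.filter fun e => e.1 = v).Nonempty).card

/-- The number of leaves (nodes of out-degree `0`) of the out-tree with edge set `A`
and root `r`. -/
def leafCount [DecidableEq V] (A : Finset (V × V)) (r : V) : ℕ :=
  ((otNodes A r).filter fun v => A.filter (fun e => e.1 = v) = ∅).card

/-- `A` is (the edge set of) an out-tree of the digraph `G` rooted at `r`. -/
def IsOutTreeOf [DecidableEq V] (G : V → V → Prop) (A : Finset (V × V)) (r : V) : Prop :=
  (∀ e ∈ A, G e.1 e.2) ∧ IsOutTree A r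

/-- `A` is (the edge set of) an out-branching of `G` rooted at `r`: an out-tree of `G`
rooted at `r` whose node set is all of `V`. -/
def IsOutBranchingOf [DecidableEq V] [Fintype V] (G : V → V → Prop) (A : Finset (V × V))
    (r : V) : Prop :=
  IsOutTreeOf G A r ∧ otNodes A r = Finset.univ

/-- The two nodes of a directed edge. -/
def pairNodes [DecidableEq V] (e : V × V) : Finset V := {e.1, e.2}

/-- `P` is a collection of pairwise node-disjoint directed paths on two nodes in `G`
(each such path being a directed edge of `G` with distinct endpoints). -/
def IsDisjointTwoPaths [DecidableEq V] (G : V → V → Prop) (P : Finset (V × V)) : Prop :=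
  (∀ e ∈ P, G e.1 e.2 ∧ e.1 ≠ e.2) ∧
  ∀ e ∈ P, ∀ e' ∈ P, e ≠ e' → Disjoint (pairNodes e) (pairNodes e')

/-!
Removing a leaf from an out-tree costs at most one internal node, and costs none if the leaf has
a sibling leaf. If an out-tree has `k` internal nodes but more than `k` leaves, two leaves share a
parent by pigeonhole. So leaves can be pruned from an out-branching with at least `k` internal
nodes until exactly `k` internal nodes and at most `k` leaves remain. Conversely, adding to an
out-tree `T` rooted at `r` the edges of an out-branching rooted at `r` that enter nodes outside
`T` gives an out-branching in which every internal node of `T` is still internal.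
-/

section OutTree
variable [DecidableEq V] {A B : Finset (V × V)} {r v : V} {e f : V × V}

lemma mem_otNodes : v ∈ otNodes A r ↔ v = r ∨ (∃ e ∈ A, e.1 = v) ∨ ∃ e ∈ A, e.2 = v := by
  simp [otNodes]

lemma root_mem_otNodes : r ∈ otNodes A r := Finset.mem_insert_self _ _

lemma fst_mem_otNodes (he : e ∈ A) : e.1 ∈ otNodes A r :=
  mem_otNodes.mpr (.inr (.inl ⟨e, he, rfl⟩))

lemma snd_mem_otNodes (he : e ∈ A) : e.2 ∈ otNodes A r :=
  mem_otNodes.mpr (.inr (.inr ⟨e, he, rfl⟩))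

lemma otNodes_mono (h : A ⊆ B) : otNodes A r ⊆ otNodes B r := by
  unfold otNodes
  gcongr

lemma mem_otNodes_of_reflTransGen (h : Relation.ReflTransGen (fun a b => (a, b) ∈ A) r v) :
    v ∈ otNodes A r := by
  rcases h.cases_tail with rfl | ⟨b, -, hb⟩
  · exact root_mem_otNodes
  · exact snd_mem_otNodes hb

lemma internalCount_eq_card_image_fst : internalCount A r = (A.image Prod.fst).card := by
  unfold internalCount
  congr 1
  ext v
  simp only [Finset.mem_filter, Finset.filter_nonempty_iff, Finset.mem_image]
  exact ⟨fun ⟨_, hv⟩ => hv, fun ⟨e, he, hev⟩ => ⟨hev ▸ fst_mem_otNodes he, e, he, hev⟩⟩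

lemma internalCount_mono (h : A ⊆ B) : internalCount A r ≤ internalCount B r := by
  simp only [internalCount_eq_card_image_fst]
  exact Finset.card_le_card (Finset.image_subset_image h)

lemma internalCount_le_internalCount_erase_add_one :
    internalCount A r ≤ internalCount (A.erase e) r + 1 := by
  simp only [internalCount_eq_card_image_fst]
  have := Finset.pred_card_le_card_erase (s := A.image Prod.fst) (a := e.1)
  have := Finset.card_le_card (Finset.erase_image_subset_image_erase Prod.fst A e)
  omega

lemma internalCount_erase_of_fst_eq (hf : f ∈ A) (hfe : f ≠ e) (h : f.1 = e.1) :
    internalCount (A.erase e) r = internalCount A r := by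
  simp only [internalCount_eq_card_image_fst]
  congr 1
  ext v
  simp only [Finset.mem_image, Finset.mem_erase]
  refine ⟨fun ⟨g, ⟨_, hg⟩, hgv⟩ => ⟨g, hg, hgv⟩, fun ⟨g, hg, hgv⟩ => ?_⟩
  by_cases hge : g = e
  · exact ⟨f, ⟨hfe, hf⟩, by rw [h, ← hge, hgv]⟩
  · exact ⟨g, ⟨hge, hg⟩, hgv⟩

lemma internalCount_add_leafCount : internalCount A r + leafCount A r = (otNodes A r).card := by
  unfold internalCount leafCount
  simp only [← Finset.not_nonempty_iff_eq_empty]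
  exact Finset.card_filter_add_card_filter_not _

end OutTree

def leafEdges [DecidableEq V] (A : Finset (V × V)) : Finset (V × V) :=
  A.filter fun e => ∀ f ∈ A, f.1 ≠ e.2

namespace IsOutTree
variable [DecidableEq V] {A : Finset (V × V)} {r v : V} {e f : V × V}

lemma exists_mem_snd_eq (hA : IsOutTree A r) (hv : v ∈ otNodes A r) (hvr : v ≠ r) :
    ∃ e ∈ A, e.2 = v := by
  obtain ⟨e, he⟩ := Finset.card_eq_one.mp (hA.in_unique v hv hvr)
  exact ⟨e, Finset.mem_filter.mp (he ▸ Finset.mem_singleton_self e)⟩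

lemma eq_of_snd_eq (hA : IsOutTree A r) (he : e ∈ A) (hf : f ∈ A) (h : e.2 = f.2) : e = f :=
  Finset.card_le_one.mp (hA.in_unique e.2 (snd_mem_otNodes he) (hA.root_no_in e he)).le e
    (Finset.mem_filter.mpr ⟨he, rfl⟩) f (Finset.mem_filter.mpr ⟨hf, h.symm⟩)

lemma exists_mem_fst_eq_root (hA : IsOutTree A r) (hne : A.Nonempty) : ∃ e ∈ A, e.1 = r := by
  obtain ⟨f, hf⟩ := hne
  rcases (hA.reach f.2 (snd_mem_otNodes hf)).cases_head with h | ⟨c, hc, -⟩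
  · exact absurd h.symm (hA.root_no_in f hf)
  · exact ⟨(r, c), hc, rfl⟩

lemma otNodes_eq_insert_image_snd (hA : IsOutTree A r) :
    otNodes A r = insert r (A.image Prod.snd) := by
  ext v
  simp only [Finset.mem_insert, Finset.mem_image]
  refine ⟨fun hv => ?_, ?_⟩
  · by_cases hvr : v = r
    · exact .inl hvr
    · exact .inr (hA.exists_mem_snd_eq hv hvr)
  · rintro (rfl | ⟨e, he, rfl⟩)
    · exact root_mem_otNodes
    · exact snd_mem_otNodes he

lemma card_otNodes (hA : IsOutTree A r) : (otNodes A r).card = A.card + 1 := by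
  rw [hA.otNodes_eq_insert_image_snd, Finset.card_insert_of_notMem, Finset.card_image_of_injOn]
  · exact fun e he f hf h => hA.eq_of_snd_eq he hf h
  · simp only [Finset.mem_image, not_exists, not_and]
    exact fun e he => hA.root_no_in e he

lemma leafCount_pos (hA : IsOutTree A r) : 0 < leafCount A r := by
  have := internalCount_add_leafCount (A := A) (r := r)
  have := hA.card_otNodes
  have : internalCount A r ≤ A.card :=
    internalCount_eq_card_image_fst (A := A) (r := r) ▸ Finset.card_image_le
  omega

lemma leafCount_le_card_leafEdges (hA : IsOutTree A r) (hne : A.Nonempty) :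
    leafCount A r ≤ (leafEdges A).card := by
  refine Finset.card_le_card_of_surjOn Prod.snd fun v hv => ?_
  obtain ⟨hvA, hleaf⟩ := Finset.mem_filter.mp (Finset.mem_coe.mp hv)
  rw [Finset.filter_eq_empty_iff] at hleaf
  have hvr : v ≠ r := by
    rintro rfl
    obtain ⟨e, he, her⟩ := hA.exists_mem_fst_eq_root hne
    exact hleaf he her
  obtain ⟨e, he, rfl⟩ := hA.exists_mem_snd_eq hvA hvr
  exact ⟨e, Finset.mem_filter.mpr ⟨he, fun f hf => hleaf hf⟩, rfl⟩

lemma otNodes_erase_subset (hA : IsOutTree A r) (he : e ∈ leafEdges A) :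
    otNodes (A.erase e) r ⊆ (otNodes A r).erase e.2 := by
  obtain ⟨heA, hleaf⟩ := Finset.mem_filter.mp he
  intro w hw
  refine Finset.mem_erase.mpr ⟨?_, otNodes_mono (Finset.erase_subset e A) hw⟩
  rcases mem_otNodes.mp hw with rfl | ⟨f, hf, rfl⟩ | ⟨f, hf, rfl⟩
  · exact fun h => hA.root_no_in e heA h.symm
  · exact hleaf f (Finset.mem_of_mem_erase hf)
  · exact fun h => Finset.ne_of_mem_erase hf (hA.eq_of_snd_eq (Finset.mem_of_mem_erase hf) heA h)

lemma erase_leafEdge (hA : IsOutTree A r) (he : e ∈ leafEdges A) : IsOutTree (A.erase e) r := by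
  obtain ⟨heA, hleaf⟩ := Finset.mem_filter.mp he
  have hsub := hA.otNodes_erase_subset he
  refine ⟨fun f hf => hA.ne f (Finset.mem_of_mem_erase hf),
    fun f hf => hA.root_no_in f (Finset.mem_of_mem_erase hf), fun w hw hwr => ?_, fun w hw => ?_⟩
  · obtain ⟨hwe, hwA⟩ := Finset.mem_erase.mp (hsub hw)
    rw [Finset.filter_erase, Finset.erase_eq_of_notMem fun h => hwe (Finset.mem_filter.mp h).2.symm]
    exact hA.in_unique w hwA hwr
  · obtain ⟨hwe, hwA⟩ := Finset.mem_erase.mp (hsub hw)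
    -- a path ending outside `e.2` cannot pass through the leaf `e.2`, so it avoids `e`
    suffices ∀ w, Relation.ReflTransGen (fun a b => (a, b) ∈ A) r w → w ≠ e.2 →
        Relation.ReflTransGen (fun a b => (a, b) ∈ A.erase e) r w from
      this w (hA.reach w hwA) hwe
    intro w hw
    induction hw with
    | refl => exact fun _ => .refl
    | @tail b c _ hbc ih =>
      exact fun hc => (ih (hleaf (b, c) hbc)).tail
        (Finset.mem_erase.mpr ⟨fun h => hc (congrArg Prod.snd h), hbc⟩)

end IsOutTree

namespace IsOutTree
variable [DecidableEq V] {A : Finset (V × V)} {r : V} {k : ℕ}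

lemma exists_leafEdge_le_internalCount_erase (hA : IsOutTree A r) (hk : 1 ≤ k)
    (hint : k ≤ internalCount A r) (hstop : ¬(internalCount A r = k ∧ leafCount A r ≤ k)) :
    ∃ e ∈ leafEdges A, k ≤ internalCount (A.erase e) r := by
  have hne : A.Nonempty := by
    have : 0 < (A.image Prod.fst).card := internalCount_eq_card_image_fst (r := r) ▸ by omega
    exact Finset.image_nonempty.mp (Finset.card_pos.mp this)
  have hleaves := hA.leafCount_le_card_leafEdges hne
  rcases hint.lt_or_eq with hgt | heq
  · obtain ⟨e, he⟩ := Finset.card_pos.mp (hA.leafCount_pos.trans_le hleaves)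
    have := internalCount_le_internalCount_erase_add_one (A := A) (r := r) (e := e)
    exact ⟨e, he, by omega⟩
  · -- more leaf edges than internal nodes: two leaf edges leave the same node
    have hlt : (A.image Prod.fst).card < (leafEdges A).card := by
      rw [← internalCount_eq_card_image_fst (r := r)]
      omega
    obtain ⟨e, he, f, hf, hef, htail⟩ := Finset.exists_ne_map_eq_of_card_lt_of_maps_to hlt
      fun e he => Finset.mem_image_of_mem Prod.fst (Finset.mem_filter.mp he).1
    refine ⟨e, he, ?_⟩
    rw [internalCount_erase_of_fst_eq (Finset.mem_filter.mp hf).1 hef.symm htail.symm]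
    exact hint

theorem exists_subset_internalCount_eq_leafCount_le (hA : IsOutTree A r) (hk : 1 ≤ k)
    (hint : k ≤ internalCount A r) :
    ∃ T ⊆ A, IsOutTree T r ∧ internalCount T r = k ∧ leafCount T r ≤ k := by
  induction A using Finset.strongInduction with
  | H A ih =>
    by_cases hstop : internalCount A r = k ∧ leafCount A r ≤ k
    · exact ⟨A, subset_rfl, hA, hstop⟩
    obtain ⟨e, he, hke⟩ := hA.exists_leafEdge_le_internalCount_erase hk hint hstop
    have heA := (Finset.mem_filter.mp he).1
    obtain ⟨T, hT, hTtree⟩ := ih _ (Finset.erase_ssubset heA) (hA.erase_leafEdge he) hke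
    exact ⟨T, hT.trans (Finset.erase_subset e A), hTtree⟩

end IsOutTree

section Graft
variable [DecidableEq V] {T B : Finset (V × V)} {r v : V} {e : V × V}

def graft (T B : Finset (V × V)) (r : V) : Finset (V × V) :=
  T ∪ B.filter fun e => e.2 ∉ otNodes T r

lemma mem_graft : e ∈ graft T B r ↔ e ∈ T ∨ e ∈ B ∧ e.2 ∉ otNodes T r := by
  simp [graft]

lemma subset_graft : T ⊆ graft T B r := Finset.subset_union_left

lemma filter_snd_graft (v : V) :
    (graft T B r).filter (fun e => e.2 = v) =
      if v ∈ otNodes T r then T.filter (fun e => e.2 = v) else B.filter (fun e => e.2 = v) := by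
  ext f
  have := snd_mem_otNodes (r := r) (e := f) (A := T)
  split_ifs <;> simp only [Finset.mem_filter, mem_graft] <;> grind

lemma IsOutTree.reflTransGen_graft (hT : IsOutTree T r)
    (hB : Relation.ReflTransGen (fun a b => (a, b) ∈ B) r v) :
    Relation.ReflTransGen (fun a b => (a, b) ∈ graft T B r) r v := by
  induction hB with
  | refl => exact .refl
  | @tail b c _ hbc ih =>
    by_cases hc : c ∈ otNodes T r
    · exact Relation.ReflTransGen.mono (fun _ _ h => subset_graft h) _ _ (hT.reach c hc)
    · exact ih.tail (mem_graft.mpr (.inr ⟨hbc, hc⟩))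

lemma isOutBranchingOf_graft [Fintype V] {G : V → V → Prop} (hT : IsOutTreeOf G T r)
    (hB : IsOutBranchingOf G B r) : IsOutBranchingOf G (graft T B r) r := by
  obtain ⟨hTG, hT⟩ := hT
  obtain ⟨⟨hBG, hB⟩, hBuniv⟩ := hB
  have hBmem (v : V) : v ∈ otNodes B r := hBuniv ▸ Finset.mem_univ v
  have hreach (v : V) := hT.reflTransGen_graft (hB.reach v (hBmem v))
  refine ⟨⟨fun e he => ?_, ⟨fun e he => ?_, fun e he => ?_, fun v _ hvr => ?_, fun v _ => hreach v⟩⟩,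
    Finset.eq_univ_of_forall fun v => mem_otNodes_of_reflTransGen (hreach v)⟩
  · rcases mem_graft.mp he with he | ⟨he, -⟩
    exacts [hTG e he, hBG e he]
  · rcases mem_graft.mp he with he | ⟨he, -⟩
    exacts [hT.ne e he, hB.ne e he]
  · rcases mem_graft.mp he with he | ⟨-, he⟩
    exacts [hT.root_no_in e he, fun h => he (h ▸ root_mem_otNodes)]
  · rw [filter_snd_graft]
    split_ifs with hv
    exacts [hT.in_unique v hv hvr, hB.in_unique v (hBmem v) hvr]

end Graft

theorem stmt9 [DecidableEq V] [Fintype V] (G : V → V → Prop) (k : ℕ) (hk : 1 ≤ k) :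
    (∃ r : V, ∃ B : Finset (V × V), IsOutBranchingOf G B r ∧ k ≤ internalCount B r) ↔
    (∃ r : V, (∃ B : Finset (V × V), IsOutBranchingOf G B r) ∧
      ∃ T : Finset (V × V), IsOutTreeOf G T r ∧
        internalCount T r = k ∧ leafCount T r ≤ k) := by
  constructor
  · rintro ⟨r, B, hB, hkB⟩
    obtain ⟨T, hTB, hT, hTk, hTleaf⟩ :=
      hB.1.2.exists_subset_internalCount_eq_leafCount_le hk hkB
    exact ⟨r, ⟨B, hB⟩, T, ⟨fun e he => hB.1.1 e (hTB he), hT⟩, hTk, hTleaf⟩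
  · rintro ⟨r, ⟨B, hB⟩, T, hT, hTk, -⟩
    exact ⟨r, graft T B r, isOutBranchingOf_graft hT hB, hTk ▸ internalCount_mono subset_graft⟩
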